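/- Let a be an integer, α a real number with 0 < α < 1, and f : ℤ → ℝ such that for every r with 0 < r < R the series ∑_{k=1}^∞ r^{k-1} |f(k+a)| converges, for some R > 0. Then for every complex s with |1−s| < min(R, 1), the series ∑_{k=1}^∞ (1−s)^{k-1} ({}_a∇^{-α} f)(k+a) converges and equals s^{-α} · ∑_{k=1}^∞ (1−s)^{k-1} f(k+a), where s^{-α} is the principal complex power (well defined since |1−s| < 1 forces Re s > 0). (The nabla Laplace transform of the α-th fractional sum is s^{-α} F(s).) -/

import Mathlib

/-- The `α`-th nabla fractional sum of `f : ℤ → ℝ` with initial instant `a`: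
`{}_a∇_k^{-α} f(k) = ∑_{i=0}^{k-a-1} (Γ(α+i)/(Γ(α) Γ(i+1))) f(k−i)`. -/
noncomputable def nablaFracSum (a : ℤ) (α : ℝ) (f : ℤ → ℝ) (k : ℤ) : ℝ :=
  ∑ i ∈ Finset.range (k - a).toNat,
    Real.Gamma (α + i) / (Real.Gamma α * Real.Gamma (i + 1)) * f (k - i)

/-!
The weights `Γ(α+i)/(Γ(α) i!)` are the binomial coefficients `(α+i-1 choose i)`, i.e. the
Taylor coefficients of `(1-z)^{-α}` on the unit disc. Evaluated at `k = a+n+1`, the fractional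
sum is the Cauchy convolution of these weights with `n ↦ f(a+n+1)`, so its Laplace series at
`z = 1-s` is the Cauchy product of `∑ (α+i-1 choose i) zⁱ = s^{-α}` with `F(s)`; both factors
converge absolutely when `|z| < min(R, 1)`.
-/

open Finset

lemma Complex.hasSum_choose_mul_pow (a : ℂ) {z : ℂ} (hz : ‖z‖ < 1) :
    HasSum (fun n : ℕ => Ring.choose (a + n - 1) n * z ^ n) ((1 - z) ^ (-a)) := by
  have h := (one_div_one_sub_cpow_hasFPowerSeriesOnBall_zero a).hasSum
    (y := z) (by rw [← ENNReal.ofReal_one, Metric.eball_ofReal]; simpa using hz)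
  simpa [FormalMultilinearSeries.ofScalars_apply_eq, cpow_neg, mul_comm] using h

lemma Complex.summable_norm_choose_mul_pow (a : ℂ) {z : ℂ} (hz : ‖z‖ < 1) :
    Summable fun n : ℕ => ‖Ring.choose (a + n - 1) n * z ^ n‖ := by
  have hp := one_div_one_sub_cpow_hasFPowerSeriesOnBall_zero a
  have h := FormalMultilinearSeries.summable_norm_apply _ (x := z) <|
    Metric.eball_subset_eball hp.r_le
      (by rw [← ENNReal.ofReal_one, Metric.eball_ofReal]; simpa using hz)
  simpa [FormalMultilinearSeries.ofScalars_apply_eq, mul_comm] using h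

lemma Real.Gamma_add_nat_eq_mul_ascPochhammer_eval {α : ℝ} (hα : ∀ m : ℕ, α ≠ -m) (n : ℕ) :
    Gamma (α + n) = Gamma α * (ascPochhammer ℝ n).eval α := by
  induction n with
  | zero => simp
  | succ n ih =>
    have hαn : α + n ≠ 0 := fun h => hα n (by linarith)
    rw [ascPochhammer_succ_eval, Nat.cast_succ, ← add_assoc, Gamma_add_one hαn, ih]
    ring

lemma Real.Gamma_add_nat_div_mul_Gamma_eq_choose {α : ℝ} (hα : ∀ m : ℕ, α ≠ -m) (n : ℕ) :
    Gamma (α + n) / (Gamma α * Gamma (n + 1)) = Ring.choose (α + n - 1) n := by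
  have hfac : (n.factorial : ℝ) ≠ 0 := by positivity
  rw [Gamma_add_nat_eq_mul_ascPochhammer_eval hα, Gamma_nat_eq_factorial,
    ← Ring.multichoose_eq, ← Polynomial.ascPochhammer_smeval_eq_eval,
    ← Ring.factorial_nsmul_multichoose_eq_ascPochhammer, nsmul_eq_mul,
    mul_div_mul_left _ _ (Gamma_ne_zero hα), mul_div_cancel_left₀ _ hfac]

lemma nablaFracSum_add_nat_add_one {α : ℝ} (hα : ∀ m : ℕ, α ≠ -m) (a : ℤ) (f : ℤ → ℝ)
    (n : ℕ) : nablaFracSum a α f (a + n + 1) =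
      ∑ i ∈ range (n + 1), Ring.choose (α + i - 1) i * f (a + (n - i : ℕ) + 1) := by
  rw [nablaFracSum, show (a + n + 1 - a).toNat = n + 1 by omega]
  refine sum_congr rfl fun i hi => ?_
  rw [Real.Gamma_add_nat_div_mul_Gamma_eq_choose hα]
  have := mem_range.mp hi
  congr 2
  omega

lemma hasSum_pow_mul_sum_range_mul {R : Type*} [NormedCommRing R] [CompleteSpace R]
    {c g : ℕ → R} {z : R} (hc : Summable fun n => ‖c n * z ^ n‖)
    (hg : Summable fun n => ‖z ^ n * g n‖) :
    HasSum (fun n => z ^ n * ∑ i ∈ range (n + 1), c i * g (n - i))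
      ((∑' n, c n * z ^ n) * ∑' n, z ^ n * g n) := by
  convert hasSum_sum_range_mul_of_summable_norm hc hg using 2 with n
  rw [mul_sum]
  refine sum_congr rfl fun i hi => ?_
  rw [← pow_mul_pow_sub z (Nat.le_of_lt_succ (mem_range.mp hi))]
  ring

lemma summable_norm_pow_mul_ofReal {g : ℕ → ℝ} {R : ℝ}
    (hg : ∀ r : ℝ, 0 < r → r < R → Summable fun k : ℕ => r ^ k * |g k|)
    {w : ℂ} (hw : ‖w‖ < R) : Summable fun k : ℕ => ‖w ^ k * (g k : ℂ)‖ := by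
  have hR : 0 < R := (norm_nonneg w).trans_lt hw
  refine (hg ((‖w‖ + R) / 2) (by positivity) (by linarith)).of_nonneg_of_le
    (fun _ => norm_nonneg _) fun k => ?_
  rw [norm_mul, norm_pow, Complex.norm_real, Real.norm_eq_abs]
  gcongr
  linarith

theorem nabla_laplace_of_fractional_sum_general
    (a : ℤ) (α : ℝ) (hα0 : 0 < α) (f : ℤ → ℝ) (R : ℝ)
    (hf : ∀ r : ℝ, 0 < r → r < R →
      Summable (fun k : ℕ => r ^ k * |f (a + (k : ℤ) + 1)|)) :
    ∀ s : ℂ, ‖1 - s‖ < min R 1 →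
      Summable (fun k : ℕ => (1 - s) ^ k * (nablaFracSum a α f (a + (k : ℤ) + 1) : ℂ)) ∧
      (∑' k : ℕ, (1 - s) ^ k * (nablaFracSum a α f (a + (k : ℤ) + 1) : ℂ)) =
        s ^ (-(α : ℂ)) * ∑' k : ℕ, (1 - s) ^ k * (f (a + (k : ℤ) + 1) : ℂ) := by
  intro s hs
  have hs1 : ‖1 - s‖ < 1 := hs.trans_le (min_le_right _ _)
  have hα : ∀ m : ℕ, α ≠ -m := fun m h => by linarith [(m.cast_nonneg : (0 : ℝ) ≤ m)]
  have hprod := hasSum_pow_mul_sum_range_mul (Complex.summable_norm_choose_mul_pow α hs1)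
    (summable_norm_pow_mul_ofReal hf (hs.trans_le (min_le_left _ _)))
  rw [(Complex.hasSum_choose_mul_pow α hs1).tsum_eq, sub_sub_cancel] at hprod
  have hterm (n : ℕ) : (nablaFracSum a α f (a + n + 1) : ℂ) =
      ∑ i ∈ range (n + 1), Ring.choose ((α : ℂ) + i - 1) i * f (a + (n - i : ℕ) + 1) := by
    rw [nablaFracSum_add_nat_add_one hα]
    push_cast
    rfl
  simp only [← hterm] at hprod
  exact ⟨hprod.summable, hprod.tsum_eq⟩

/-- **The nabla Laplace transform of the `α`-th fractional sum is `s^{-α} F(s)`.**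
For every complex `s` with `|1−s| < min(R, 1)` the nabla Laplace series of
`{}_a∇^{-α} f` converges and equals `s^{-α}` times the nabla Laplace transform of `f`,
where `s^{-α}` is the principal complex power. -/
theorem nabla_laplace_of_fractional_sum
    (a : ℤ) (α : ℝ) (hα0 : 0 < α) (hα1 : α < 1) (f : ℤ → ℝ) (R : ℝ) (hR : 0 < R)
    (hf : ∀ r : ℝ, 0 < r → r < R →
      Summable (fun k : ℕ => r ^ k * |f (a + (k : ℤ) + 1)|)) :
    ∀ s : ℂ, ‖1 - s‖ < min R 1 →
      Summable (fun k : ℕ => (1 - s) ^ k * (nablaFracSum a α f (a + (k : ℤ) + 1) : ℂ)) ∧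
      (∑' k : ℕ, (1 - s) ^ k * (nablaFracSum a α f (a + (k : ℤ) + 1) : ℂ)) =
        s ^ (-(α : ℂ)) * ∑' k : ℕ, (1 - s) ^ k * (f (a + (k : ℤ) + 1) : ℂ) :=
  nabla_laplace_of_fractional_sum_general a α hα0 f R hf
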